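/- arXiv:2104.11396 — 2 statements merged into one kernel-verified Lean document; each statement's English description precedes it below -/
import Mathlib

section
/- All intermediate states in an n-qubit quantum Fourier transform circuit are rank-1 (product states) if the input to the circuit is a standard basis state |i₁⟩ ⊗ |i₂⟩ ⊗ ... ⊗ |iₙ⟩ with i_j ∈ {0,1}. -/
/-!
A controlled gate whose control factor is a basis vector `|0⟩` or `|1⟩` acts on a product state
as the identity or as `U` on the target factor, so it preserves product structure; one-qubit
gates and swaps preserve product states anyway. It therefore suffices that no control qubit has
been touched by an earlier gate, since it then still carries its input basis vector. In the QFT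
circuit qubit `j` controls only gates of the blocks of qubits `i < j`, which precede its own
block, and all swaps come last; this property passes to every prefix of the circuit.
-/

open scoped BigOperators

namespace QFTRankOne

/-- The state space of `n` qubits, viewed as an order-`n` tensor. -/
abbrev QState (n : ℕ) := (Fin n → Fin 2) → ℂ

/-- The Hadamard gate. -/
noncomputable def Hgate : Matrix (Fin 2) (Fin 2) ℂ :=
  ((1 / Real.sqrt 2 : ℝ) : ℂ) • !![1, 1; 1, -1]

/-- The phase rotation gate `R_k = diag(1, e^{-2πi/2^k})`. -/
noncomputable def Rgate (k : ℕ) : Matrix (Fin 2) (Fin 2) ℂ :=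
  !![1, 0; 0, Complex.exp (-(2 * Real.pi * Complex.I) / (2 ^ k))]

/-- Gates of a quantum circuit on `n` qubits: one-qubit gates, controlled one-qubit
gates, and swaps. -/
inductive Gate (n : ℕ)
  | one (U : Matrix (Fin 2) (Fin 2) ℂ) (q : Fin n)
  | ctrl (U : Matrix (Fin 2) (Fin 2) ℂ) (c t : Fin n)
  | swp (p q : Fin n)

/-- The action of a gate on an `n`-qubit state. -/
noncomputable def applyGate {n : ℕ} : Gate n → QState n → QState n
  | Gate.one U q, ψ => fun f => ∑ j : Fin 2, U (f q) j * ψ (Function.update f q j)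
  | Gate.ctrl U c t, ψ => fun f =>
      if f c = 1 then ∑ j : Fin 2, U (f t) j * ψ (Function.update f t j) else ψ f
  | Gate.swp p q, ψ => fun f => ψ (f ∘ Equiv.swap p q)

/-- Apply a list of gates (a circuit) in order. -/
noncomputable def applyGates {n : ℕ} (gs : List (Gate n)) (ψ : QState n) : QState n :=
  gs.foldl (fun φ g => applyGate g φ) ψ

/-- The gate sequence of the `n`-qubit quantum Fourier transform circuit:
for each qubit `i`, a Hadamard gate followed by the controlled-`R_{j-i+1}` gates
with control `j > i` and target `i`, and finally the qubit-reversing swaps. -/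
noncomputable def qftGates (n : ℕ) : List (Gate n) :=
  ((List.finRange n).flatMap fun i =>
      Gate.one Hgate i ::
        (((List.finRange n).filter fun (j : Fin n) => decide ((i : ℕ) < (j : ℕ))).map
          fun (j : Fin n) => Gate.ctrl (Rgate ((j : ℕ) - (i : ℕ) + 1)) j i))
    ++ (((List.finRange n).filter fun (i : Fin n) => decide ((i : ℕ) < (i.rev : ℕ))).map
          fun (i : Fin n) => Gate.swp i i.rev)

/-- A state is rank-1 (a product state) if it is an outer product of `n` vectors in ℂ². -/
def IsRankOne {n : ℕ} (ψ : QState n) : Prop :=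
  ∃ a : Fin n → Fin 2 → ℂ, ∀ f, ψ f = ∏ i, a i (f i)


open scoped Matrix

variable {n : ℕ}

def productState (a : Fin n → Fin 2 → ℂ) : QState n := fun f => ∏ i, a i (f i)

theorem isRankOne_productState (a : Fin n → Fin 2 → ℂ) : IsRankOne (productState a) :=
  ⟨a, fun _ => rfl⟩

theorem productState_eq_zero {a : Fin n → Fin 2 → ℂ} {f : Fin n → Fin 2} (q : Fin n)
    (h : a q (f q) = 0) : productState a f = 0 :=
  Finset.prod_eq_zero (Finset.mem_univ q) h

theorem ite_eq_productState_single (b : Fin n → Fin 2) :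
    (fun f => if f = b then 1 else 0 : QState n) = productState fun i => Pi.single (b i) 1 := by
  funext f
  simp [productState, Pi.single_apply, Fintype.prod_boole, funext_iff]

theorem productState_update_update (a : Fin n → Fin 2 → ℂ) (q : Fin n) (v : Fin 2 → ℂ)
    (f : Fin n → Fin 2) (j : Fin 2) :
    productState (Function.update a q v) (Function.update f q j) =
      v j * ∏ i ∈ Finset.univ.erase q, a i (f i) := by
  rw [productState, ← Finset.mul_prod_erase _ _ (Finset.mem_univ q)]
  simp only [Function.update_self]
  congr 1
  refine Finset.prod_congr rfl fun i hi => ?_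
  simp only [Function.update_of_ne (Finset.ne_of_mem_erase hi)]

theorem applyGate_ctrl_eq_ite (U : Matrix (Fin 2) (Fin 2) ℂ) (c t : Fin n) (ψ : QState n)
    (f : Fin n → Fin 2) :
    applyGate (.ctrl U c t) ψ f = if f c = 1 then applyGate (.one U t) ψ f else ψ f :=
  rfl

theorem applyGate_one_productState (U : Matrix (Fin 2) (Fin 2) ℂ) (q : Fin n)
    (a : Fin n → Fin 2 → ℂ) :
    applyGate (.one U q) (productState a) =
      productState (Function.update a q (U *ᵥ a q)) := by
  funext f
  have hin : ∀ j, productState a (Function.update f q j) =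
      a q j * ∏ i ∈ Finset.univ.erase q, a i (f i) := fun j => by
    simpa using productState_update_update a q (a q) f j
  have hout := productState_update_update a q (U *ᵥ a q) f (f q)
  rw [Function.update_eq_self] at hout
  simp only [applyGate, hin, hout, Matrix.mulVec, dotProduct, Finset.sum_mul, mul_assoc]

theorem applyGate_ctrl_productState {U : Matrix (Fin 2) (Fin 2) ℂ} {c t : Fin n}
    {a : Fin n → Fin 2 → ℂ} {x : Fin 2} (hct : c ≠ t) (hc : a c = Pi.single x 1) :
    applyGate (.ctrl U c t) (productState a) =
      productState (if x = 1 then Function.update a t (U *ᵥ a t) else a) := by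
  funext f
  have hupd : Function.update a t (U *ᵥ a t) c = a c := Function.update_of_ne hct _ _
  rw [applyGate_ctrl_eq_ite, applyGate_one_productState]
  by_cases hfx : f c = x
  · rw [← hfx]
    split_ifs <;> rfl
  · have hvanish : ∀ a' : Fin n → Fin 2 → ℂ, a' c = a c → productState a' f = 0 :=
      fun a' ha' => productState_eq_zero c (by simp [ha', hc, hfx])
    split_ifs <;> simp only [hvanish _ hupd, hvanish _ rfl]

theorem applyGate_swp_productState (p q : Fin n) (a : Fin n → Fin 2 → ℂ) :
    applyGate (.swp p q) (productState a) = productState (a ∘ Equiv.swap p q) := by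
  funext f
  exact Fintype.prod_equiv (Equiv.swap p q) _ _ fun i => by simp

def Gate.touched : Gate n → Set (Fin n)
  | .one _ q => {q}
  | .ctrl _ _ t => {t}
  | .swp p q => {p, q}

def Gate.ControlAvoids (T : Set (Fin n)) : Gate n → Prop
  | .ctrl _ c t => c ∉ insert t T
  | _ => True

theorem Gate.ControlAvoids.mono {T T' : Set (Fin n)} {g : Gate n} (h : g.ControlAvoids T')
    (hT : T ⊆ T') : g.ControlAvoids T := by
  cases g with
  | ctrl U c t => exact fun hc => h (Set.insert_subset_insert hT hc)
  | _ => trivial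

def touchedBy (gs : List (Gate n)) : Set (Fin n) := {q | ∃ g ∈ gs, q ∈ g.touched}

theorem touchedBy_nil : touchedBy ([] : List (Gate n)) = ∅ := by
  simp [touchedBy]

theorem touchedBy_cons (g : Gate n) (gs : List (Gate n)) :
    touchedBy (g :: gs) = g.touched ∪ touchedBy gs := by
  ext q
  simp [touchedBy]

/-- `ControlsUntouched T gs`: no gate of `gs` is controlled by a qubit in `T` or touched by an
earlier gate of `gs`. -/
def ControlsUntouched : Set (Fin n) → List (Gate n) → Prop
  | _, [] => True
  | T, g :: gs => g.ControlAvoids T ∧ ControlsUntouched (T ∪ g.touched) gs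

theorem controlsUntouched_append {T : Set (Fin n)} {l₁ l₂ : List (Gate n)} :
    ControlsUntouched T (l₁ ++ l₂) ↔
      ControlsUntouched T l₁ ∧ ControlsUntouched (T ∪ touchedBy l₁) l₂ := by
  induction l₁ generalizing T with
  | nil => simp [ControlsUntouched, touchedBy_nil]
  | cons g l₁ ih =>
    simp only [List.cons_append, ControlsUntouched, ih, touchedBy_cons, Set.union_assoc,
      and_assoc]

theorem controlsUntouched_of_forall_controlAvoids {T : Set (Fin n)} {gs : List (Gate n)}
    (h : ∀ g ∈ gs, g.ControlAvoids (T ∪ touchedBy gs)) : ControlsUntouched T gs := by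
  induction gs generalizing T with
  | nil => trivial
  | cons g gs ih =>
    refine ⟨(h g List.mem_cons_self).mono Set.subset_union_left, ih fun g' hg' => ?_⟩
    rw [Set.union_assoc, ← touchedBy_cons]
    exact h g' (List.mem_cons_of_mem _ hg')

def IsProductBasisOutside (b : Fin n → Fin 2) (T : Set (Fin n)) (ψ : QState n) : Prop :=
  ∃ a, ψ = productState a ∧ ∀ q ∉ T, a q = Pi.single (b q) 1

theorem isProductBasisOutside_basis (b : Fin n → Fin 2) :
    IsProductBasisOutside b ∅ (fun f => if f = b then 1 else 0) :=
  ⟨_, ite_eq_productState_single b, fun _ _ => rfl⟩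

theorem IsProductBasisOutside.applyGate {b : Fin n → Fin 2} {T : Set (Fin n)} {ψ : QState n}
    (h : IsProductBasisOutside b T ψ) {g : Gate n} (hg : g.ControlAvoids T) :
    IsProductBasisOutside b (T ∪ g.touched) (applyGate g ψ) := by
  obtain ⟨a, rfl, ha⟩ := h
  cases g with
  | one U q =>
    refine ⟨_, applyGate_one_productState U q a, fun r hr => ?_⟩
    simp only [Gate.touched, Set.mem_union, Set.mem_singleton_iff, not_or] at hr
    rw [Function.update_of_ne hr.2, ha r hr.1]
  | ctrl U c t =>
    simp only [Gate.ControlAvoids, Set.mem_insert_iff, not_or] at hg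
    refine ⟨_, applyGate_ctrl_productState hg.1 (ha c hg.2), fun r hr => ?_⟩
    simp only [Gate.touched, Set.mem_union, Set.mem_singleton_iff, not_or] at hr
    split_ifs
    · rw [Function.update_of_ne hr.2, ha r hr.1]
    · exact ha r hr.1
  | swp p q =>
    refine ⟨_, applyGate_swp_productState p q a, fun r hr => ?_⟩
    simp only [Gate.touched, Set.mem_union, Set.mem_insert_iff, Set.mem_singleton_iff,
      not_or] at hr
    rw [Function.comp_apply, Equiv.swap_apply_of_ne_of_ne hr.2.1 hr.2.2, ha r hr.1]

theorem IsProductBasisOutside.isRankOne_applyGates {b : Fin n → Fin 2} {T : Set (Fin n)}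
    {ψ : QState n} (h : IsProductBasisOutside b T ψ) {gs : List (Gate n)}
    (hgs : ControlsUntouched T gs) : IsRankOne (applyGates gs ψ) := by
  induction gs generalizing T ψ with
  | nil =>
    obtain ⟨a, rfl, -⟩ := h
    exact isRankOne_productState a
  | cons g gs ih => exact ih (h.applyGate hgs.1) hgs.2

noncomputable def qftBlock (i : Fin n) : List (Gate n) :=
  Gate.one Hgate i ::
    (((List.finRange n).filter fun (j : Fin n) => decide ((i : ℕ) < (j : ℕ))).map
      fun (j : Fin n) => Gate.ctrl (Rgate ((j : ℕ) - (i : ℕ) + 1)) j i)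

def qftSwaps (n : ℕ) : List (Gate n) :=
  ((List.finRange n).filter fun (i : Fin n) => decide ((i : ℕ) < (i.rev : ℕ))).map
    fun (i : Fin n) => Gate.swp i i.rev

theorem qftGates_eq (n : ℕ) : qftGates n = (List.finRange n).flatMap qftBlock ++ qftSwaps n :=
  rfl

theorem touchedBy_qftBlock (i : Fin n) : touchedBy (qftBlock i) = {i} := by
  ext q
  simp [touchedBy, qftBlock, Gate.touched]

theorem controlsUntouched_qftBlock {T : Set (Fin n)} {i : Fin n} (hT : ∀ t ∈ T, t < i) :
    ControlsUntouched T (qftBlock i) := by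
  refine controlsUntouched_of_forall_controlAvoids fun g hg => ?_
  simp only [qftBlock, List.mem_cons, List.mem_map, List.mem_filter, List.mem_finRange,
    true_and, decide_eq_true_eq] at hg
  rcases hg with rfl | ⟨j, hij, rfl⟩
  · trivial
  · simp only [Gate.ControlAvoids, touchedBy_qftBlock, Set.mem_insert_iff, Set.mem_union,
      Set.mem_singleton_iff, not_or]
    have hji : j ≠ i := Fin.ne_of_gt hij
    exact ⟨hji, fun hj => (hT j hj).asymm hij, hji⟩

theorem controlsUntouched_flatMap_qftBlock {T : Set (Fin n)} {l : List (Fin n)}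
    (hl : l.Pairwise (· < ·)) (hT : ∀ t ∈ T, ∀ i ∈ l, t < i) :
    ControlsUntouched T (l.flatMap qftBlock) := by
  induction l generalizing T with
  | nil => trivial
  | cons i l ih =>
    rw [List.pairwise_cons] at hl
    rw [List.flatMap_cons, controlsUntouched_append, touchedBy_qftBlock]
    refine ⟨controlsUntouched_qftBlock fun t ht => hT t ht i List.mem_cons_self,
      ih hl.2 fun t ht j hj => ?_⟩
    rcases ht with ht | rfl
    · exact hT t ht j (List.mem_cons_of_mem _ hj)
    · exact hl.1 j hj

theorem controlsUntouched_qftGates (n : ℕ) : ControlsUntouched ∅ (qftGates n) := by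
  rw [qftGates_eq, controlsUntouched_append]
  refine ⟨controlsUntouched_flatMap_qftBlock (List.pairwise_lt_finRange n) (by simp),
    controlsUntouched_of_forall_controlAvoids fun g hg => ?_⟩
  obtain ⟨i, -, rfl⟩ := List.mem_map.1 hg
  trivial

/-- All the intermediate states in a QFT circuit are rank 1 if the input to the
circuit is a standard basis state. -/
theorem qft_intermediate_states_rank_one (n : ℕ) (b : Fin n → Fin 2)
    (pre suf : List (Gate n)) (h : qftGates n = pre ++ suf) :
    IsRankOne (applyGates pre (fun f => if f = b then 1 else 0)) := by
  have hpre : ControlsUntouched ∅ pre :=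
    (controlsUntouched_append.1 (h ▸ controlsUntouched_qftGates n)).1
  exact (isProductBasisOutside_basis b).isRankOne_applyGates hpre

end QFTRankOne
end

section
/- The Grover search operator with oracle of a marked items maps states of CP rank R to states of CP rank at most 2(a+1)R: applying U_o = I - 2Σ_{i=1}^a |y^(i)⟩⟨y^(i)| (with y^(i) standard basis states) multiplies CP rank by at most a+1, and subsequently applying U_d = 2|h⟩⟨h| - I multiplies CP rank by at most 2. -/
/-!
A Kronecker product of local operators maps a product state to a product state, so it does
not increase the CP rank; the CP rank is subadditive, and a scalar multiple can be absorbed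
into one tensor factor (here `n > 0` is needed). Since `U_o = 1 - 2 ∑ᵢ (Kronecker product)`
with `a` summands and `U_d = 2 (Kronecker product) - 1`, the ranks grow to at most
`R + a R` and then `2 (a + 1) R`.
-/

open Matrix

namespace Matrix

variable {ι κ R : Type*} [Fintype ι]

def piKronecker [CommMonoid R] (M : ι → Matrix κ κ R) : Matrix (ι → κ) (ι → κ) R :=
  of fun f g => ∏ i, M i (f i) (g i)

theorem piKronecker_mulVec_prod [DecidableEq ι] [Fintype κ] [CommSemiring R]
    (M : ι → Matrix κ κ R) (v : ι → κ → R) :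
    piKronecker M *ᵥ (fun f => ∏ i, v i (f i)) = fun f => ∏ i, (M i *ᵥ v i) (f i) := by
  ext f
  simp only [mulVec, dotProduct, piKronecker, of_apply, Fintype.prod_sum,
    ← Finset.prod_mul_distrib]

end Matrix

def CPRankLE {ι κ R : Type*} [Fintype ι] [CommSemiring R] (r : ℕ) (ψ : (ι → κ) → R) : Prop :=
  ∃ v : Fin r → ι → κ → R, ∀ f, ψ f = ∑ k, ∏ i, v k i (f i)

namespace CPRankLE

section CommSemiring

variable {ι κ R : Type*} [Fintype ι] [CommSemiring R] {r s : ℕ} {φ ψ : (ι → κ) → R}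

theorem zero : CPRankLE 0 (0 : (ι → κ) → R) :=
  ⟨Fin.elim0, fun _ => rfl⟩

theorem add (hφ : CPRankLE r φ) (hψ : CPRankLE s ψ) : CPRankLE (r + s) (φ + ψ) := by
  obtain ⟨v, hv⟩ := hφ
  obtain ⟨w, hw⟩ := hψ
  exact ⟨Fin.append v w, fun f => by simp [Fin.sum_univ_add, hv, hw]⟩

theorem sum {m : ℕ} {φ : Fin m → (ι → κ) → R} (hφ : ∀ j, CPRankLE r (φ j)) :
    CPRankLE (m * r) (∑ j, φ j) := by
  induction m with
  | zero => simpa using zero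
  | succ m ih =>
    rw [Fin.sum_univ_succ, Nat.succ_mul, add_comm (m * r)]
    exact (hφ 0).add (ih fun j => hφ j.succ)

theorem smul [Nonempty ι] [DecidableEq ι] (c : R) (hψ : CPRankLE r ψ) :
    CPRankLE r (c • ψ) := by
  obtain ⟨v, hv⟩ := hψ
  obtain ⟨i₀⟩ := ‹Nonempty ι›
  refine ⟨fun k i => (if i = i₀ then c else 1) • v k i, fun f => ?_⟩
  simp only [Pi.smul_apply, smul_eq_mul, hv, Finset.mul_sum, Finset.prod_mul_distrib,
    Finset.prod_ite_eq', Finset.mem_univ, if_true]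

theorem piKronecker_mulVec [DecidableEq ι] [Fintype κ] (M : ι → Matrix κ κ R)
    (hψ : CPRankLE r ψ) : CPRankLE r (piKronecker M *ᵥ ψ) := by
  obtain ⟨v, hv⟩ := hψ
  have hψ_sum : ψ = ∑ k, fun f => ∏ i, v k i (f i) := by
    ext f
    simp [hv]
  exact ⟨fun k i => M i *ᵥ v k i, fun f => by
    simp [hψ_sum, mulVec_sum, piKronecker_mulVec_prod]⟩

end CommSemiring

theorem sub {ι κ R : Type*} [Fintype ι] [CommRing R] [Nonempty ι] [DecidableEq ι] {r s : ℕ}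
    {φ ψ : (ι → κ) → R} (hφ : CPRankLE r φ) (hψ : CPRankLE s ψ) :
    CPRankLE (r + s) (φ - ψ) := by
  simpa [sub_eq_add_neg] using hφ.add (hψ.smul (-1))

end CPRankLE

theorem grover_cp_rank_growth_general (n a R : ℕ) (hn : 0 < n)
    (y : Fin a → Fin n → Fin 2)
    (E : Fin 2 → Matrix (Fin 2) (Fin 2) ℂ)
    (kron : (Fin n → Matrix (Fin 2) (Fin 2) ℂ) →
      Matrix (Fin n → Fin 2) (Fin n → Fin 2) ℂ)
    (hkron : ∀ M, kron M = Matrix.of fun f g => ∏ i, M i (f i) (g i))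
    (h1 : Fin 2 → ℂ)
    (Uo Ud : Matrix (Fin n → Fin 2) (Fin n → Fin 2) ℂ)
    (hUo : Uo = 1 - 2 • ∑ i : Fin a, kron fun j => E (y i j))
    (hUd : Ud = 2 • kron (fun _ => Matrix.vecMulVec h1 (star h1)) - 1)
    (ψ : (Fin n → Fin 2) → ℂ)
    (hψ : ∃ v : Fin R → Fin n → Fin 2 → ℂ, ∀ f, ψ f = ∑ k, ∏ i, v k i (f i)) :
    (∃ w : Fin ((a + 1) * R) → Fin n → Fin 2 → ℂ,
      ∀ f, Uo.mulVec ψ f = ∑ k, ∏ i, w k i (f i)) ∧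
    (∃ w : Fin (2 * ((a + 1) * R)) → Fin n → Fin 2 → ℂ,
      ∀ f, Ud.mulVec (Uo.mulVec ψ) f = ∑ k, ∏ i, w k i (f i)) := by
  obtain rfl : kron = piKronecker := funext hkron
  have : Nonempty (Fin n) := ⟨⟨0, hn⟩⟩
  have hψ : CPRankLE R ψ := hψ
  have hUoψ : Uo *ᵥ ψ = ψ - (2 : ℂ) • ∑ i, piKronecker (fun j => E (y i j)) *ᵥ ψ := by
    rw [hUo, sub_mulVec, one_mulVec, ← Nat.cast_smul_eq_nsmul ℂ, smul_mulVec, sum_mulVec]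
    norm_num
  have horacle : CPRankLE ((a + 1) * R) (Uo *ᵥ ψ) := by
    rw [hUoψ, add_one_mul, add_comm]
    exact hψ.sub ((CPRankLE.sum fun i => hψ.piKronecker_mulVec _).smul 2)
  have hUd' : Ud = (2 : ℂ) • piKronecker (fun _ => vecMulVec h1 (star h1)) - 1 := by
    rw [hUd, ← Nat.cast_smul_eq_nsmul ℂ]
    norm_num
  refine ⟨horacle, ?_⟩
  rw [hUd', sub_mulVec, one_mulVec, smul_mulVec, two_mul]
  exact ((horacle.piKronecker_mulVec _).smul 2).sub horacle

/-- Grover's operator with `a` marked items maps CP rank `R` states to states of CP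
rank at most `2(a+1)R`: the oracle `U_o = I - 2∑ᵢ|y⁽ⁱ⁾⟩⟨y⁽ⁱ⁾|` multiplies the CP rank
by at most `a + 1`, and the diffusion `U_d = 2|h⟩⟨h| - I` by at most `2`. -/
theorem grover_cp_rank_growth (n a R : ℕ) (hn : 0 < n)
    (y : Fin a → Fin n → Fin 2) (hy : Function.Injective y)
    (E : Fin 2 → Matrix (Fin 2) (Fin 2) ℂ)
    (hE : ∀ j, E j = Matrix.single j j 1)
    (kron : (Fin n → Matrix (Fin 2) (Fin 2) ℂ) →
      Matrix (Fin n → Fin 2) (Fin n → Fin 2) ℂ)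
    (hkron : ∀ M, kron M = Matrix.of fun f g => ∏ i, M i (f i) (g i))
    (h1 : Fin 2 → ℂ) (hh1 : h1 = fun _ => ((1 / Real.sqrt 2 : ℝ) : ℂ))
    (Uo Ud : Matrix (Fin n → Fin 2) (Fin n → Fin 2) ℂ)
    (hUo : Uo = 1 - 2 • ∑ i : Fin a, kron fun j => E (y i j))
    (hUd : Ud = 2 • kron (fun _ => Matrix.vecMulVec h1 (star h1)) - 1)
    (ψ : (Fin n → Fin 2) → ℂ)
    (hψ : ∃ v : Fin R → Fin n → Fin 2 → ℂ, ∀ f, ψ f = ∑ k, ∏ i, v k i (f i)) :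
    (∃ w : Fin ((a + 1) * R) → Fin n → Fin 2 → ℂ,
      ∀ f, Uo.mulVec ψ f = ∑ k, ∏ i, w k i (f i)) ∧
    (∃ w : Fin (2 * ((a + 1) * R)) → Fin n → Fin 2 → ℂ,
      ∀ f, Ud.mulVec (Uo.mulVec ψ) f = ∑ k, ∏ i, w k i (f i)) :=
  grover_cp_rank_growth_general n a R hn y E kron hkron h1 Uo Ud hUo hUd ψ hψ
end
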